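/- Let w : ℝ^n → ℝ be a convex piecewise linear function which is linear on each cone of a complete fan Σ and strictly convex with respect to Σ (i.e., the linear functions on distinct maximal cones are distinct, and w is not linear on any set strictly larger than a maximal cone). Let S' ⊂ Σ(1) be a set of ray generators spanning a simplicial cone that is not contained in the set of rays of any single maximal cone of Σ. Suppose w is adjusted by subtracting a linear function v so that w - v vanishes on all elements of S'. Then there exists m' ∈ Σ(1) \ S' with (w - v)(m') < 0. -/
import Mathlib

/-- Strict convexity step in Proposition 4.1. `R` is the set `Σ(1)` of ray
generators of a complete fan in `ℝⁿ`, `maxCones` the family of ray sets `S_σ`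
of maximal cones, and `w` a convex piecewise linear function which is strictly
convex with respect to `Σ`: any linear minorant of `w` on the rays has its
equality set contained in the rays of a single maximal cone.  If `S' ⊆ Σ(1)`
is not contained in the ray set of any maximal cone, and the linear function
`v` satisfies `w - v = 0` on `S'`, then there is `m' ∈ Σ(1) \ S'` with
`(w - v)(m') < 0`. -/
theorem stmt_13 {n : ℕ} (R : Finset (Fin n → ℤ))
    (maxCones : Finset (Finset (Fin n → ℤ)))
    (hsub : ∀ S ∈ maxCones, S ⊆ R)
    (hcomplete : ∀ x : Fin n → ℝ, ∃ S ∈ maxCones, ∃ c : (Fin n → ℤ) → ℝ,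
      (∀ m, 0 ≤ c m) ∧ x = ∑ m ∈ S, c m • (fun j => (m j : ℝ)))
    (w : (Fin n → ℤ) → ℝ)
    (hstrict : ∀ L : (Fin n → ℝ) →ₗ[ℝ] ℝ,
      (∀ m ∈ R, L (fun j => (m j : ℝ)) ≤ w m) →
      ∃ S ∈ maxCones, ∀ m ∈ R, L (fun j => (m j : ℝ)) = w m → m ∈ S)
    (S' : Finset (Fin n → ℤ)) (hS' : S' ⊆ R)
    (hnot : ∀ S ∈ maxCones, ¬ S' ⊆ S)
    (v : (Fin n → ℝ) →ₗ[ℝ] ℝ)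
    (hv : ∀ m ∈ S', w m - v (fun j => (m j : ℝ)) = 0) :
    ∃ m' ∈ R, m' ∉ S' ∧ w m' - v (fun j => (m' j : ℝ)) < 0 := by
  by_contra hcon
  push_neg at hcon
  have hmin : ∀ m ∈ R, v (fun j => (m j : ℝ)) ≤ w m := by
    intro m hm
    by_cases h : m ∈ S'
    · linarith [hv m h]
    · linarith [hcon m hm h]
  obtain ⟨S, hS, heq⟩ := hstrict v hmin
  exact hnot S hS (fun m hm => heq m (hS' hm) (by linarith [hv m hm]))
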